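/- arXiv:2209.06171 — 2 statements merged into one kernel-verified Lean document; each statement's English description precedes it below -/
import Mathlib

section
/- Let D be an oriented graph with ω(D) ≥ 2 satisfying χ⃗(N(v)) ≤ γ for all vertices v. Let K be a maximum tournament and P a directed path in D such that K and P form a path-minimizing closed tournament C. Then χ⃗(N[K]) ≤ ω(D)·γ, and moreover χ⃗(N[C]) ≤ χ⃗(N(P) \ N[K]) + ω(D)·γ + 2. -/
namespace DichiP4

variable {V : Type*}

/-- An oriented graph: an arc relation with no digons (hence also no loops). -/
def Oriented (A : V → V → Prop) : Prop := ∀ u v, A u v → ¬ A v u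

/-- Adjacency in the underlying (undirected) graph. -/
def Adj (A : V → V → Prop) (u v : V) : Prop := A u v ∨ A v u

/-- The neighborhood `N(v)` of a vertex in the underlying graph. -/
def nbr (A : V → V → Prop) (v : V) : Set V := {w | Adj A v w}

/-- `N(S)`: the neighborhood of a set of vertices. -/
def nbrSet (A : V → V → Prop) (S : Set V) : Set V := (⋃ v ∈ S, nbr A v) \ S

/-- `N[S]`: the closed neighborhood of a set of vertices. -/
def cnbrSet (A : V → V → Prop) (S : Set V) : Set V := ⋃ v ∈ S, insert v (nbr A v)

/-- A clique in the underlying graph (= the vertex set of a tournament). -/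
def IsClique (A : V → V → Prop) (K : Set V) : Prop :=
  ∀ u ∈ K, ∀ v ∈ K, u ≠ v → Adj A u v

/-- The clique number `ω(D)` of the underlying graph. -/
noncomputable def cliqueNum (A : V → V → Prop) : ℕ :=
  sSup {n | ∃ K : Set V, IsClique A K ∧ K.Finite ∧ K.ncard = n}

/-- The set `s` induces an acyclic subdigraph (no directed cycle within `s`). -/
def AcyclicOn (A : V → V → Prop) (s : Set V) : Prop :=
  ∀ v, ¬ Relation.TransGen (fun x y => x ∈ s ∧ y ∈ s ∧ A x y) v v

/-- The set `s` admits a dicoloring with `k` colors: every color class induces an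
acyclic subdigraph. -/
def DicolorableOn (A : V → V → Prop) (s : Set V) (k : ℕ) : Prop :=
  ∃ c : V → ℕ, (∀ v ∈ s, c v < k) ∧ ∀ i : ℕ, AcyclicOn A {v | v ∈ s ∧ c v = i}

/-- The dichromatic number `χ⃗(s)` of the subdigraph induced by `s`. -/
noncomputable def dichi (A : V → V → Prop) (s : Set V) : ℕ :=
  sInf {k | DicolorableOn A s k}

/-- `A` has an induced subdigraph isomorphic to `B`. -/
def HasInducedCopy {W : Type*} (A : V → V → Prop) (B : W → W → Prop) : Prop :=
  ∃ f : W → V, Function.Injective f ∧ ∀ x y : W, B x y ↔ A (f x) (f y)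

/-- `A` is `B`-free: no induced subdigraph of `A` is isomorphic to `B`. -/
def Free {W : Type*} (A : V → V → Prop) (B : W → W → Prop) : Prop :=
  ¬ HasInducedCopy A B

/-- `P⃗4`: the orientation of the path `0 – 1 – 2 – 3` with arcs `0→1, 1→2, 2→3`. -/
def P4vec : Fin 4 → Fin 4 → Prop := fun x y =>
  (x = 0 ∧ y = 1) ∨ (x = 1 ∧ y = 2) ∨ (x = 2 ∧ y = 3)

/-- `A⃗4`: the orientation of the path `0 – 1 – 2 – 3` with arcs `1→0, 1→2, 3→2`. -/
def A4vec : Fin 4 → Fin 4 → Prop := fun x y =>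
  (x = 1 ∧ y = 0) ∨ (x = 1 ∧ y = 2) ∨ (x = 3 ∧ y = 2)

/-- `Q⃗4`: the orientation of the path `0 – 1 – 2 – 3` with arcs `0→1, 2→1, 3→2`. -/
def Q4vec : Fin 4 → Fin 4 → Prop := fun x y =>
  (x = 0 ∧ y = 1) ∨ (x = 2 ∧ y = 1) ∨ (x = 3 ∧ y = 2)

/-- `Q⃗4'`: the orientation of the path `0 – 1 – 2 – 3` with arcs `1→0, 2→1, 2→3`. -/
def Q4'vec : Fin 4 → Fin 4 → Prop := fun x y =>
  (x = 1 ∧ y = 0) ∨ (x = 2 ∧ y = 1) ∨ (x = 2 ∧ y = 3)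

/-- `B` is an orientation of the path on four vertices `0 – 1 – 2 – 3`. -/
def IsP4Orientation (B : Fin 4 → Fin 4 → Prop) : Prop :=
  Oriented B ∧ ∀ x y : Fin 4, Adj B x y ↔ ((x : ℕ) + 1 = (y : ℕ) ∨ (y : ℕ) + 1 = (x : ℕ))

/-- `p 1 → p 2 → ⋯ → p ℓ` is a directed path in `A` (distinct vertices). -/
def IsDirPath (A : V → V → Prop) (ℓ : ℕ) (p : ℕ → V) : Prop :=
  1 ≤ ℓ ∧ Set.InjOn p (Set.Icc 1 ℓ) ∧ ∀ i, 1 ≤ i → i < ℓ → A (p i) (p (i + 1))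

/-- A directed path `p 1 → ⋯ → p ℓ` is forward-induced: no arc `(p i, p j)` with
`j > i + 1`. -/
def ForwardInduced (A : V → V → Prop) (ℓ : ℕ) (p : ℕ → V) : Prop :=
  ∀ i j, 1 ≤ i → j ≤ ℓ → i + 1 < j → ¬ A (p i) (p j)

/-- `p 1 → ⋯ → p ℓ` is a shortest directed path from `p 1` to `p ℓ`. -/
def IsShortestDirPath (A : V → V → Prop) (ℓ : ℕ) (p : ℕ → V) : Prop :=
  IsDirPath A ℓ p ∧
    ∀ (m : ℕ) (q : ℕ → V), IsDirPath A m q → q 1 = p 1 → q m = p ℓ → ℓ ≤ m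

/-- The vertex set `V(P)` of the path `p 1, …, p ℓ`. -/
def pathSet (ℓ : ℕ) (p : ℕ → V) : Set V := p '' Set.Icc 1 ℓ

/-- `N(P)`: the neighborhood of the vertex set of the path. -/
def pathNbrs (A : V → V → Prop) (ℓ : ℕ) (p : ℕ → V) : Set V := nbrSet A (pathSet ℓ p)

/-- `F i`: vertices of `N(P)` whose first neighbor on the path is `p i`. -/
def Fatt (A : V → V → Prop) (ℓ : ℕ) (p : ℕ → V) (i : ℕ) : Set V :=
  {v ∈ pathNbrs A ℓ p | Adj A v (p i) ∧ ∀ i', 1 ≤ i' → i' < i → ¬ Adj A v (p i')}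

/-- `L j`: vertices of `N(P)` whose last neighbor on the path is `p j`. -/
def Latt (A : V → V → Prop) (ℓ : ℕ) (p : ℕ → V) (j : ℕ) : Set V :=
  {v ∈ pathNbrs A ℓ p | Adj A v (p j) ∧ ∀ j', j < j' → j' ≤ ℓ → ¬ Adj A v (p j')}

/-- `F i ⁺`: in-neighbors of `p i` in `F i`. -/
def FattP (A : V → V → Prop) (ℓ : ℕ) (p : ℕ → V) (i : ℕ) : Set V :=
  {v ∈ Fatt A ℓ p i | A v (p i)}

/-- `F i ⁻`: out-neighbors of `p i` in `F i`. -/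
def FattM (A : V → V → Prop) (ℓ : ℕ) (p : ℕ → V) (i : ℕ) : Set V :=
  {v ∈ Fatt A ℓ p i | A (p i) v}

/-- `L j ⁺`: in-neighbors of `p j` in `L j`. -/
def LattP (A : V → V → Prop) (ℓ : ℕ) (p : ℕ → V) (j : ℕ) : Set V :=
  {v ∈ Latt A ℓ p j | A v (p j)}

/-- `L j ⁻`: out-neighbors of `p j` in `L j`. -/
def LattM (A : V → V → Prop) (ℓ : ℕ) (p : ℕ → V) (j : ℕ) : Set V :=
  {v ∈ Latt A ℓ p j | A (p j) v}

/-- `W^p = (F₂⁻ ∪ ⋯ ∪ F_{ℓ-1}⁻) ∪ (L₂⁺ ∪ ⋯ ∪ L_{ℓ-1}⁺)`. -/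
def Wp (A : V → V → Prop) (ℓ : ℕ) (p : ℕ → V) : Set V :=
  (⋃ i ∈ Set.Icc 2 (ℓ - 1), FattM A ℓ p i) ∪ ⋃ i ∈ Set.Icc 2 (ℓ - 1), LattP A ℓ p i

/-- `W^a = (F₂⁺ ∪ ⋯ ∪ F_{ℓ-1}⁺) ∪ (L₂⁻ ∪ ⋯ ∪ L_{ℓ-1}⁻)`. -/
def Wa (A : V → V → Prop) (ℓ : ℕ) (p : ℕ → V) : Set V :=
  (⋃ i ∈ Set.Icc 2 (ℓ - 1), FattP A ℓ p i) ∪ ⋃ i ∈ Set.Icc 2 (ℓ - 1), LattM A ℓ p i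

/-- `R^p = N(P) \ (N({p1, p2, pℓ}) ∪ W^p)`. -/
def Rp (A : V → V → Prop) (ℓ : ℕ) (p : ℕ → V) : Set V :=
  pathNbrs A ℓ p \ (nbrSet A {p 1, p 2, p ℓ} ∪ Wp A ℓ p)

/-- `R^a = N(P) \ (N({p1, pℓ}) ∪ W^a)`. -/
def Ra (A : V → V → Prop) (ℓ : ℕ) (p : ℕ → V) : Set V :=
  pathNbrs A ℓ p \ (nbrSet A {p 1, p ℓ} ∪ Wa A ℓ p)

/-- A dipolar set: a nonempty set `S` partitioned into `S⁺` (no out-neighbor outside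
`S`) and `S⁻` (no in-neighbor outside `S`). -/
def IsDipolar (A : V → V → Prop) (S : Set V) : Prop :=
  S.Nonempty ∧ ∃ Sp Sm : Set V, Sp ∪ Sm = S ∧ Disjoint Sp Sm ∧
    (∀ v ∈ Sp, ∀ w, w ∉ S → ¬ A v w) ∧ ∀ v ∈ Sm, ∀ w, w ∉ S → ¬ A w v

/-- Reachability by a directed path staying inside `s`. -/
def ReachIn (A : V → V → Prop) (s : Set V) (u v : V) : Prop :=
  Relation.ReflTransGen (fun x y => x ∈ s ∧ y ∈ s ∧ A x y) u v

/-- A digraph is strongly connected. -/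
def StronglyConnected (A : V → V → Prop) : Prop :=
  ∀ u v : V, Relation.ReflTransGen A u v

/-- `t` is a strongly connected component of the subdigraph induced by `s`. -/
def IsSCCOf (A : V → V → Prop) (s t : Set V) : Prop :=
  t ⊆ s ∧ t.Nonempty ∧ (∀ u ∈ t, ∀ v ∈ t, ReachIn A s u v) ∧
    ∀ u ∈ t, ∀ v ∈ s, ReachIn A s u v → ReachIn A s v u → v ∈ t

/-- A source strongly connected component: all arcs between it and the rest of `s`
begin in it. -/
def IsSourceSCC (A : V → V → Prop) (s t : Set V) : Prop :=
  IsSCCOf A s t ∧ ∀ u ∈ s, ∀ v ∈ t, A u v → u ∈ t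

/-- A sink strongly connected component: all arcs between it and the rest of `s`
end in it. -/
def IsSinkSCC (A : V → V → Prop) (s t : Set V) : Prop :=
  IsSCCOf A s t ∧ ∀ u ∈ t, ∀ v ∈ s, A u v → v ∈ t

/-- `K` (a tournament of maximum order) and the directed path `p 1 → ⋯ → p ℓ`
(from a source SCC of `D[K]` to a sink SCC of `D[K]`) form a closed tournament
`C = K ∪ V(P)`. -/
def FormsClosedTournament (A : V → V → Prop) (K : Set V) (ℓ : ℕ) (p : ℕ → V) : Prop :=
  IsClique A K ∧ K.Finite ∧ K.ncard = cliqueNum A ∧ IsDirPath A ℓ p ∧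
    (∃ t, IsSourceSCC A K t ∧ p 1 ∈ t) ∧ ∃ t, IsSinkSCC A K t ∧ p ℓ ∈ t

/-- `K` and `P` form a path-minimizing closed tournament: `|P|` is minimum among
all pairs forming a closed tournament. -/
def FormsPathMinClosedTournament (A : V → V → Prop) (K : Set V) (ℓ : ℕ) (p : ℕ → V) :
    Prop :=
  FormsClosedTournament A K ℓ p ∧
    ∀ (K' : Set V) (ℓ' : ℕ) (p' : ℕ → V), FormsClosedTournament A K' ℓ' p' → ℓ ≤ ℓ'

/-- The strong neighborhood of `S`: neighbors of `S` having both an in-neighbor and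
an out-neighbor in `S`. -/
def strongNbrs (A : V → V → Prop) (S : Set V) : Set V :=
  {v ∈ nbrSet A S | (∃ u ∈ S, A u v) ∧ ∃ u ∈ S, A v u}


section Aux

variable {V : Type*}

lemma noLoop {A : V → V → Prop} (hA : Oriented A) (v : V) : ¬ A v v :=
  fun h => hA v v h h

lemma acyclicOn_mono' {A : V → V → Prop} {s t : Set V} (h : s ⊆ t)
    (ht : AcyclicOn A t) : AcyclicOn A s := by
  intro v hv
  exact ht v (Relation.TransGen.mono (r := fun x y => x ∈ s ∧ y ∈ s ∧ A x y)
    (p := fun x y => x ∈ t ∧ y ∈ t ∧ A x y) (fun x y ⟨hx, hy, ha⟩ => ⟨h hx, h hy, ha⟩) v v hv)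

lemma acyclicOn_subsingleton' {A : V → V → Prop} (hA : Oriented A) {s : Set V}
    (h : s.Subsingleton) : AcyclicOn A s := by
  intro v hv
  cases hv with
  | single h1 => exact noLoop hA v h1.2.2
  | tail h1 h2 =>
      obtain ⟨hb, hv', hab⟩ := h2
      exact noLoop hA v ((h hb hv') ▸ hab)

lemma dicolorableOn_mono' {A : V → V → Prop} {s t : Set V} {k : ℕ} (h : s ⊆ t)
    (ht : DicolorableOn A t k) : DicolorableOn A s k := by
  obtain ⟨c, hc, hac⟩ := ht
  refine ⟨c, fun v hv => hc v (h hv), fun i => acyclicOn_mono' ?_ (hac i)⟩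
  rintro v ⟨h1, h2⟩
  exact ⟨h h1, h2⟩

lemma dicolorableOn_union' {A : V → V → Prop} {s t : Set V} {k m : ℕ}
    (hs : DicolorableOn A s k) (ht : DicolorableOn A t m) :
    DicolorableOn A (s ∪ t) (k + m) := by
  classical
  obtain ⟨cs, hcs, has⟩ := hs
  obtain ⟨ct, hct, hat⟩ := ht
  refine ⟨fun v => if v ∈ s then cs v else ct v + k, ?_, ?_⟩
  · intro v hv
    by_cases h : v ∈ s
    · simp only [h, if_true]
      have := hcs v h; omega
    · simp only [h, if_false]
      have := hct v (hv.resolve_left h); omega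
  · intro i
    by_cases hik : i < k
    · refine acyclicOn_mono' ?_ (has i)
      rintro v ⟨hv, hc⟩
      by_cases h : v ∈ s
      · simp only [h, if_true] at hc; exact ⟨h, hc⟩
      · simp only [h, if_false] at hc; omega
    · refine acyclicOn_mono' ?_ (hat (i - k))
      rintro v ⟨hv, hc⟩
      by_cases h : v ∈ s
      · simp only [h, if_true] at hc; have := hcs v h; omega
      · simp only [h, if_false] at hc
        exact ⟨hv.resolve_left h, by omega⟩

lemma dicolorableOn_card' [Fintype V] {A : V → V → Prop} (hA : Oriented A)
    (s : Set V) : DicolorableOn A s (Fintype.card V) := by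
  refine ⟨fun v => (Fintype.equivFin V v : ℕ), fun v _ => (Fintype.equivFin V v).isLt, ?_⟩
  intro i
  refine acyclicOn_subsingleton' hA ?_
  rintro x ⟨-, hx⟩ y ⟨-, hy⟩
  have hx' : ((Fintype.equivFin V) x : ℕ) = i := hx
  have hy' : ((Fintype.equivFin V) y : ℕ) = i := hy
  exact (Fintype.equivFin V).injective (Fin.ext (by omega))

lemma dichi_le' {A : V → V → Prop} {s : Set V} {k : ℕ} (h : DicolorableOn A s k) :
    dichi A s ≤ k := Nat.sInf_le h

lemma dicolorableOn_dichi' [Fintype V] {A : V → V → Prop} (hA : Oriented A)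
    (s : Set V) : DicolorableOn A s (dichi A s) := by
  have h : (Fintype.card V) ∈ {k | DicolorableOn A s k} := dicolorableOn_card' hA s
  exact Nat.sInf_mem ⟨_, h⟩

lemma dichi_mono' [Fintype V] {A : V → V → Prop} (hA : Oriented A) {s t : Set V}
    (h : s ⊆ t) : dichi A s ≤ dichi A t :=
  dichi_le' (dicolorableOn_mono' h (dicolorableOn_dichi' hA t))

lemma dichi_union' [Fintype V] {A : V → V → Prop} (hA : Oriented A) (s t : Set V) :
    dichi A (s ∪ t) ≤ dichi A s + dichi A t :=
  dichi_le' (dicolorableOn_union' (dicolorableOn_dichi' hA s) (dicolorableOn_dichi' hA t))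

lemma dichi_biUnion' [Fintype V] {A : V → V → Prop} (hA : Oriented A) (γ : ℕ)
    (hγ : ∀ v : V, dichi A (nbr A v) ≤ γ) {K : Set V} (hK : K.Finite) :
    dichi A (⋃ v ∈ K, nbr A v) ≤ K.ncard * γ := by
  refine Set.Finite.induction_on K hK ?_ (fun {a s} ha hsfin ih => ?_)
  case _ =>
      have h0 : DicolorableOn A (⋃ v ∈ (∅ : Set V), nbr A v) 0 := by
        refine ⟨fun _ => 0, ?_, ?_⟩
        · intro v hv; simp at hv
        · intro i
          refine acyclicOn_subsingleton' hA ?_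
          rintro x ⟨hx, -⟩
          simp at hx
      exact le_trans (dichi_le' h0) (by simp)
  case _ =>
      rw [Set.biUnion_insert, Set.ncard_insert_of_notMem ha hsfin]
      have h1 := (dichi_union' hA (nbr A a) (⋃ v ∈ s, nbr A v)).trans
        (add_le_add (hγ a) ih)
      have h2 : (s.ncard + 1) * γ = γ + s.ncard * γ := by ring
      omega

lemma forwardInduced_of_min' {A : V → V → Prop} {K : Set V} {ℓ : ℕ} {p : ℕ → V}
    (hC : FormsPathMinClosedTournament A K ℓ p) : ForwardInduced A ℓ p := by
  intro i j hi hj hij harcij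
  obtain ⟨⟨hclq, hfin, hcard, hpath, hsrc, hsink⟩, hmin⟩ := hC
  obtain ⟨hℓ, hinj, harc⟩ := hpath
  classical
  set Δ := j - i - 1 with hΔ
  set ℓ' := ℓ - Δ with hℓ'def
  have hΔ1 : 1 ≤ Δ := by omega
  have hj' : i + 1 + Δ = j := by omega
  have hle : ℓ' + Δ = ℓ := by omega
  have hiℓ' : i + 1 ≤ ℓ' := by omega
  set q : ℕ → V := fun k => if k ≤ i then p k else p (k + Δ) with hq
  have hq1 : q 1 = p 1 := by
    simp only [hq]; rw [if_pos hi]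
  have hqℓ : q ℓ' = p ℓ := by
    simp only [hq]; rw [if_neg (by omega : ¬ ℓ' ≤ i)]
    congr 1
  have hdp : IsDirPath A ℓ' q := by
    refine ⟨by omega, ?_, ?_⟩
    · intro a ha b hb heq
      rw [Set.mem_Icc] at ha hb
      simp only [hq] at heq
      by_cases h1 : a ≤ i <;> by_cases h2 : b ≤ i
      · rw [if_pos h1, if_pos h2] at heq
        exact hinj (Set.mem_Icc.2 ⟨ha.1, by omega⟩) (Set.mem_Icc.2 ⟨hb.1, by omega⟩) heq
      · rw [if_pos h1, if_neg h2] at heq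
        have := hinj (Set.mem_Icc.2 ⟨ha.1, by omega⟩) (Set.mem_Icc.2 (by omega)) heq
        omega
      · rw [if_neg h1, if_pos h2] at heq
        have := hinj (Set.mem_Icc.2 (by omega)) (Set.mem_Icc.2 ⟨hb.1, by omega⟩) heq
        omega
      · rw [if_neg h1, if_neg h2] at heq
        have := hinj (Set.mem_Icc.2 (by omega)) (Set.mem_Icc.2 (by omega)) heq
        omega
    · intro k hk1 hkℓ'
      simp only [hq]
      by_cases h1 : k ≤ i
      · by_cases h2 : k + 1 ≤ i
        · rw [if_pos h1, if_pos h2]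
          exact harc k hk1 (by omega)
        · rw [if_pos h1, if_neg h2]
          have hk : k = i := by omega
          subst hk
          rw [hj']
          exact harcij
      · rw [if_neg h1, if_neg (by omega : ¬ k + 1 ≤ i)]
        have he : k + 1 + Δ = (k + Δ) + 1 := by omega
        rw [he]
        exact harc (k + Δ) (by omega) (by omega)
  have hforms : FormsClosedTournament A K ℓ' q := by
    refine ⟨hclq, hfin, hcard, hdp, ?_, ?_⟩
    · obtain ⟨t, ht, hpt⟩ := hsrc
      exact ⟨t, ht, by rw [hq1]; exact hpt⟩
    · obtain ⟨t, ht, hpt⟩ := hsink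
      exact ⟨t, ht, by rw [hqℓ]; exact hpt⟩
  have := hmin K ℓ' q hforms
  omega

end Aux

/-- if `K` and `P` form a path-minimizing closed tournament `C`, then
`χ⃗(N[K]) ≤ ω(D)·γ` and `χ⃗(N[C]) ≤ χ⃗(N(P) \ N[K]) + ω(D)·γ + 2`. -/
theorem dichi_closed_clique_nbhd {V : Type*} [Fintype V]
    (A : V → V → Prop) (hA : Oriented A) (hω : 2 ≤ cliqueNum A)
    (γ : ℕ) (hγ : ∀ v : V, dichi A (nbr A v) ≤ γ)
    (K : Set V) (ℓ : ℕ) (p : ℕ → V)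
    (hC : FormsPathMinClosedTournament A K ℓ p) :
    dichi A (cnbrSet A K) ≤ cliqueNum A * γ ∧
      dichi A (cnbrSet A (K ∪ pathSet ℓ p)) ≤
        dichi A (pathNbrs A ℓ p \ cnbrSet A K) + cliqueNum A * γ + 2 := by
  classical
  have hFI : ForwardInduced A ℓ p := forwardInduced_of_min' hC
  obtain ⟨⟨hclq, hfin, hcard, hpath, -, -⟩, -⟩ := hC
  -- Part 1
  have hsub1 : cnbrSet A K ⊆ ⋃ v ∈ K, nbr A v := by
    intro u hu
    simp only [cnbrSet, Set.mem_iUnion] at hu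
    obtain ⟨v, hv, hu⟩ := hu
    rcases Set.mem_insert_iff.1 hu with rfl | hnb
    · have h2 : 1 < K.ncard := by omega
      obtain ⟨w, hw, hne⟩ := Set.exists_ne_of_one_lt_ncard h2 u
      exact Set.mem_biUnion hw (hclq w hw u hv hne)
    · exact Set.mem_biUnion hv hnb
  have h1 : dichi A (cnbrSet A K) ≤ cliqueNum A * γ := by
    calc dichi A (cnbrSet A K) ≤ dichi A (⋃ v ∈ K, nbr A v) := dichi_mono' hA hsub1
      _ ≤ K.ncard * γ := dichi_biUnion' hA γ hγ hfin
      _ = cliqueNum A * γ := by rw [hcard]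
  refine ⟨h1, ?_⟩
  -- 2-coloring of the path
  have hpath2 : DicolorableOn A (pathSet ℓ p) 2 := by
    obtain ⟨hℓ1, hinj, harc⟩ := hpath
    set idx : V → ℕ := fun v => sInf {i | i ∈ Set.Icc 1 ℓ ∧ p i = v} with hidx
    have hmem : ∀ v ∈ pathSet ℓ p, idx v ∈ Set.Icc 1 ℓ ∧ p (idx v) = v := by
      rintro v ⟨i, hi, rfl⟩
      have hne : {i' | i' ∈ Set.Icc 1 ℓ ∧ p i' = p i}.Nonempty := ⟨i, hi, rfl⟩
      exact Nat.sInf_mem hne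
    refine ⟨fun v => idx v % 2, fun v _ => Nat.mod_lt _ (by norm_num), ?_⟩
    intro c0 v hv
    have hstep : ∀ x y : V,
        (x ∈ {w | w ∈ pathSet ℓ p ∧ idx w % 2 = c0} ∧
          y ∈ {w | w ∈ pathSet ℓ p ∧ idx w % 2 = c0} ∧ A x y) → idx y < idx x := by
      rintro x y ⟨⟨hx, hcx⟩, ⟨hy, hcy⟩, hxy⟩
      obtain ⟨hax, hpx⟩ := hmem x hx
      obtain ⟨hay, hpy⟩ := hmem y hy
      rw [Set.mem_Icc] at hax hay
      have hne : idx x ≠ idx y := by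
        intro h
        have hxy' : x = y := by rw [← hpx, ← hpy, h]
        exact noLoop hA x (hxy' ▸ hxy)
      rcases lt_trichotomy (idx x) (idx y) with hlt | heq | hgt
      · by_cases hsucc : idx y = idx x + 1
        · omega
        · exfalso
          exact hFI (idx x) (idx y) hax.1 hay.2 (by omega) (by rw [hpx, hpy]; exact hxy)
      · exact absurd heq hne
      · exact hgt
    have key : ∀ a b : V, Relation.TransGen
        (fun x y => x ∈ {w | w ∈ pathSet ℓ p ∧ idx w % 2 = c0} ∧
          y ∈ {w | w ∈ pathSet ℓ p ∧ idx w % 2 = c0} ∧ A x y) a b → idx b < idx a := by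
      intro a b h
      induction h with
      | single h => exact hstep _ _ h
      | tail h1 h2 ih => exact lt_trans (hstep _ _ h2) ih
    exact absurd (key v v hv) (lt_irrefl _)
  -- decomposition of N[C]
  have hsub2 : cnbrSet A (K ∪ pathSet ℓ p) ⊆
      (pathNbrs A ℓ p \ cnbrSet A K) ∪ cnbrSet A K ∪ pathSet ℓ p := by
    intro u hu
    simp only [cnbrSet, Set.mem_iUnion] at hu
    obtain ⟨v, hv, hu⟩ := hu
    rcases hv with hvK | hvP
    · refine Or.inl (Or.inr ?_)
      exact Set.mem_biUnion hvK hu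
    · rcases Set.mem_insert_iff.1 hu with rfl | hnb
      · exact Or.inr hvP
      · by_cases hP : u ∈ pathSet ℓ p
        · exact Or.inr hP
        · by_cases hK : u ∈ cnbrSet A K
          · exact Or.inl (Or.inr hK)
          · exact Or.inl (Or.inl ⟨⟨Set.mem_biUnion hvP hnb, hP⟩, hK⟩)
  calc dichi A (cnbrSet A (K ∪ pathSet ℓ p))
      ≤ dichi A ((pathNbrs A ℓ p \ cnbrSet A K) ∪ cnbrSet A K ∪ pathSet ℓ p) :=
        dichi_mono' hA hsub2
    _ ≤ (dichi A (pathNbrs A ℓ p \ cnbrSet A K) + dichi A (cnbrSet A K))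
          + dichi A (pathSet ℓ p) :=
        le_trans (dichi_union' hA _ _) (add_le_add (dichi_union' hA _ _) le_rfl)
    _ ≤ dichi A (pathNbrs A ℓ p \ cnbrSet A K) + cliqueNum A * γ + 2 :=
        add_le_add (add_le_add le_rfl h1) (dichi_le' hpath2)


end DichiP4
end

section
/- Let P = p1→p2→⋯→p_ℓ be a forward-induced directed path in an oriented graph D, let (F_1,…,F_ℓ) and (L_1,…,L_ℓ) be the partitions of N(P) by first and last attachment on P. If D is P⃗4-free, then for all 2 ≤ i < j ≤ ℓ−1 there is no arc from F_i^- to F_j and no arc from L_i to L_j^+. -/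
/-!
An arc `v → w` from `F i ⁻` to `F j` closes the induced `P⃗4` `p (i-1) → p i → v → w`, and an arc
`v → w` from `L i` to `L j ⁺` the induced `P⃗4` `v → w → p j → p (j+1)`: every missing adjacency
is forced by `p i` being the first (resp. `p j` the last) neighbour on the path.
-/

namespace DichiP4

variable {V : Type*}

section

variable {A : V → V → Prop}

lemma Oriented.irrefl (hA : Oriented A) (u : V) : ¬ A u u := fun h => hA u u h h

lemma adj_comm {u v : V} : Adj A u v ↔ Adj A v u := or_comm

lemma injective_of_arc_iff {W : Type*} {B : W → W → Prop}
    (hB : ∀ x y, (∀ z, (B x z ↔ B y z) ∧ (B z x ↔ B z y)) → x = y)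
    {f : W → V} (hf : ∀ x y, B x y ↔ A (f x) (f y)) : Function.Injective f := by
  intro x y hxy
  exact hB x y fun z => by simp only [hf, hxy, iff_self, and_self]

lemma P4vec_eq_of_same_nbrs (x y : Fin 4)
    (h : ∀ z, (P4vec x z ↔ P4vec y z) ∧ (P4vec z x ↔ P4vec z y)) : x = y := by
  revert x y
  unfold P4vec
  decide

lemma hasInducedCopy_P4vec (hA : Oriented A) {a b c d : V}
    (hab : A a b) (hbc : A b c) (hcd : A c d)
    (hac : ¬ Adj A a c) (had : ¬ Adj A a d) (hbd : ¬ Adj A b d) :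
    HasInducedCopy A P4vec := by
  have hf : ∀ x y, P4vec x y ↔ A (![a, b, c, d] x) (![a, b, c, d] y) := by
    simp only [Adj, not_or] at hac had hbd
    have := hA.irrefl
    intro x y
    fin_cases x <;> fin_cases y <;> simp_all [P4vec, hA _ _ hab, hA _ _ hbc, hA _ _ hcd]
  exact ⟨_, injective_of_arc_iff P4vec_eq_of_same_nbrs hf, hf⟩

variable {ℓ : ℕ} {p : ℕ → V} {i j : ℕ}

lemma not_arc_FattM_Fatt (hA : Oriented A) (hfree : Free A P4vec) (hp : IsDirPath A ℓ p)
    (h2i : 2 ≤ i) (hij : i < j) (hjℓ : j ≤ ℓ) :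
    ∀ v ∈ FattM A ℓ p i, ∀ w ∈ Fatt A ℓ p j, ¬ A v w := by
  rintro v ⟨⟨-, -, hv⟩, hpv⟩ w ⟨-, -, hw⟩ hvw
  obtain ⟨k, rfl⟩ : ∃ k, i = k + 1 := ⟨i - 1, by omega⟩
  exact hfree <| hasInducedCopy_P4vec hA (hp.2.2 k (by omega) (by omega)) hpv hvw
    (adj_comm.not.1 (hv k (by omega) (by omega)))
    (adj_comm.not.1 (hw k (by omega) (by omega)))
    (adj_comm.not.1 (hw (k + 1) (by omega) hij))

lemma not_arc_Latt_LattP (hA : Oriented A) (hfree : Free A P4vec) (hp : IsDirPath A ℓ p)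
    (hij : i < j) (hjℓ : j < ℓ) :
    ∀ v ∈ Latt A ℓ p i, ∀ w ∈ LattP A ℓ p j, ¬ A v w := by
  rintro v ⟨-, -, hv⟩ w ⟨⟨-, -, hw⟩, hwp⟩ hvw
  exact hfree <| hasInducedCopy_P4vec hA hvw hwp (hp.2.2 j (by omega) hjℓ)
    (hv j hij hjℓ.le) (hv (j + 1) (by omega) hjℓ) (hw (j + 1) (by omega) hjℓ)

end

theorem P4free_forbidden_arcs_general {V : Type*}
    (A : V → V → Prop) (hA : Oriented A) (hfree : Free A P4vec)
    (ℓ : ℕ) (p : ℕ → V) (hp : IsDirPath A ℓ p)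
    (i j : ℕ) (h2i : 2 ≤ i) (hij : i < j) (hj : j ≤ ℓ - 1) :
    (∀ v ∈ FattM A ℓ p i, ∀ w ∈ Fatt A ℓ p j, ¬ A v w) ∧
      ∀ v ∈ Latt A ℓ p i, ∀ w ∈ LattP A ℓ p j, ¬ A v w :=
  ⟨not_arc_FattM_Fatt hA hfree hp h2i hij (by omega),
    not_arc_Latt_LattP hA hfree hp hij (by omega)⟩

/-- in a `P⃗4`-free oriented graph, for a forward-induced directed path
`p 1 → ⋯ → p ℓ` and `2 ≤ i < j ≤ ℓ - 1`, there is no arc from `F i ⁻` to `F j`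
and no arc from `L i` to `L j ⁺`. -/
theorem P4free_forbidden_arcs {V : Type*}
    (A : V → V → Prop) (hA : Oriented A) (hfree : Free A P4vec)
    (ℓ : ℕ) (p : ℕ → V) (hp : IsDirPath A ℓ p) (hfi : ForwardInduced A ℓ p)
    (i j : ℕ) (h2i : 2 ≤ i) (hij : i < j) (hj : j ≤ ℓ - 1) :
    (∀ v ∈ FattM A ℓ p i, ∀ w ∈ Fatt A ℓ p j, ¬ A v w) ∧
      ∀ v ∈ Latt A ℓ p i, ∀ w ∈ LattP A ℓ p j, ¬ A v w :=
  P4free_forbidden_arcs_general A hA hfree ℓ p hp i j h2i hij hj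

end DichiP4
end
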